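/- Let B ∈ V(A'(T)) and let c, d ∈ e_i(m̄,B) for some i ∈ {0,1,2} and m̄ ∈ B² ∪ B. If g(x) is a unary polynomial of B generated by fundamental translations such that g(d) < g(c), then there is a polynomial g'(x) with g'(c) = g(c) and g'(d) = g(d) such that one of the following holds for some constants p, q ∈ B: (1) g'(x) = S_j(n̄,p,q,h(x)) for some j ∈ {0,1,2} and n̄ ∈ B² ∪ B; (2) g'(x) = f(J(p,q,h(x))); (3) g'(x) = f(J'(p,q,h(x))); (4) g'(x) = f(K(p,q,h(x))); where f(x) and h(x) are polynomials generated by fundamental translations and h(x) is either 0-absorbing or satisfies Range(h) ⊆ Range(S_k) for some k ∈ {0,1,2}. -/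
import Mathlib


open FirstOrder

namespace McKenzie

/-- A Turing machine instruction `(s, r, w, d, t)`: "in state `s` reading `r`,
write `w`, move in direction `d` (`true` = right, `false` = left), enter state `t`". -/
structure Instr (n : ℕ) where
  s : Fin (n + 1)
  r : Bool
  w : Bool
  d : Bool
  t : Fin (n + 1)

/-- A Turing machine: a finite list of instructions on states `μ0, …, μn`
(represented by `Fin (states+1)`), where `μ0` is the halting state (carrying no
instructions) and `μ1` is the initial state. -/
structure TM where
  states : ℕ
  instr : List (Instr states)
  halt_no_instr : ∀ i ∈ instr, i.s ≠ 0

/-- A configuration of a Turing machine: a tape, a head position and a state. -/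
structure Cfg (T : TM) where
  tape : ℤ → Bool
  head : ℤ
  state : Fin (T.states + 1)

/-- One computation step of the machine (using the first applicable instruction). -/
def TM.step (T : TM) (Q : Cfg T) : Option (Cfg T) :=
  match T.instr.find? (fun i => decide (i.s = Q.state ∧ i.r = Q.tape Q.head)) with
  | none => none
  | some i =>
      some ⟨Function.update Q.tape Q.head i.w,
        if i.d then Q.head + 1 else Q.head - 1, i.t⟩

/-- The configuration after `n` steps when started in state `μ1` on the blank tape. -/
def TM.run (T : TM) : ℕ → Option (Cfg T)
  | 0 => some ⟨fun _ => false, 0, 1⟩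
  | n + 1 => (T.run n).bind T.step

/-- `T` halts (started in the initial state `μ1` on the empty, all-zero, tape). -/
def TM.Halts (T : TM) : Prop := ∃ (n : ℕ) (Q : Cfg T), T.run n = some Q ∧ Q.state = 0

/-- The universe of the algebra `A'(T)`:
`0`, `U = {1,2,H}`, `W = {C, D, ∂C, ∂D}`, and
`V = {C_ir^s, D_ir^s, M_i^r}` together with their barred versions. -/
inductive El (T : TM) : Type
  | zero
  | one
  | two
  | H
  | C (bar : Bool)
  | D (bar : Bool)
  | Cv (bar : Bool) (i : Fin (T.states + 1)) (r s : Bool)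
  | Dv (bar : Bool) (i : Fin (T.states + 1)) (r s : Bool)
  | Mv (bar : Bool) (i : Fin (T.states + 1)) (r : Bool)
  deriving DecidableEq

namespace El

variable {T : TM}

/-- The bar involution `∂`, defined (only) on `V ∪ W`. -/
def bar : El T → Option (El T)
  | C b => some (C (!b))
  | D b => some (D (!b))
  | Cv b i r s => some (Cv (!b) i r s)
  | Dv b i r s => some (Dv (!b) i r s)
  | Mv b i r => some (Mv (!b) i r)
  | _ => none

/-- The flat (height 1) semilattice meet with bottom element `0`. -/
def meet (x y : El T) : El T := if x = y then x else zero

/-- Join in the flat semilattice, for comparable elements. -/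
def fjoin (x y : El T) : El T := if x = zero then y else x

/-- The nonassociative multiplication: `2·D = H·C = D`, `1·C = C`,
`2·∂D = H·∂C = ∂D`, `1·∂C = ∂C`, and `0` otherwise. -/
def mul : El T → El T → El T
  | two, D b => D b
  | H, C b => D b
  | one, C b => C b
  | _, _ => zero

/-- `J(x,y,z) = (x ∧ ∂y ∧ z) ∨ (x ∧ y)`. -/
def opJ (x y z : El T) : El T :=
  if x = y then x else if bar y = some x then meet x z else zero

/-- `J'(x,y,z) = (x ∧ y ∧ z) ∨ (x ∧ ∂y)`. -/
def opJ' (x y z : El T) : El T :=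
  if x = y then meet x z else if bar y = some x then x else zero

/-- `K(x,y,z) = (∂x ∧ y) ∨ (∂x ∧ ∂y ∧ z) ∨ (x ∧ y ∧ z)`. -/
def opK (x y z : El T) : El T :=
  if bar y = some x then y
  else if x = y ∧ bar z = some x then z
  else meet x (meet y z)

/-- `(x ∧ y) ∨ (x ∧ z)`. -/
def sCore (x y z : El T) : El T := fjoin (meet x y) (meet x z)

/-- Membership in `V₀` (the elements of `V` with state index `0`). -/
def isV0 : El T → Bool
  | Cv _ i _ _ => decide (i = 0)
  | Dv _ i _ _ => decide (i = 0)
  | Mv _ i _ => decide (i = 0)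
  | _ => false

/-- `S₀(u,x,y,z) = (x∧y) ∨ (x∧z)` if `u ∈ V₀`, else `0`. -/
def opS0 (u x y z : El T) : El T := if isV0 u then sCore x y z else zero

/-- `S₁(u,x,y,z) = (x∧y) ∨ (x∧z)` if `u ∈ {1,2}`, else `0`. -/
def opS1 (u x y z : El T) : El T := if u = one ∨ u = two then sCore x y z else zero

/-- `S₂(u,v,x,y,z) = (x∧y) ∨ (x∧z)` if `u = ∂v ∈ V ∪ W`, else `0`. -/
def opS2 (u v x y z : El T) : El T := if bar v = some u then sCore x y z else zero

/-- The operation `T(w,x,y,z)`. -/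
def opT (w x y z : El T) : El T :=
  if mul w x = mul y z then
    if w = y ∧ x = z then mul w x
    else if mul w x ≠ zero then (bar (mul w x)).getD zero else zero
  else zero

/-- `I(1) = C₁₀⁰`, `I(H) = M₁⁰`, `I(2) = D₁₀⁰`, and `0` otherwise. -/
def opI : El T → El T
  | one => Cv false 1 false false
  | H => Mv false 1 false
  | two => Dv false 1 false false
  | _ => zero

/-- The left-moving machine operation `L_{irt}` attached to an instruction
`(μ_i, r, s, L, μ_j)` and `t ∈ {0,1}`. -/
def opL (ins : Instr T.states) (t : Bool) : El T → El T → El T → El T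
  | one, one, Cv b i r s' => if i = ins.s ∧ r = ins.r then Cv b ins.t t s' else zero
  | H, one, Cv b i r s' => if i = ins.s ∧ r = ins.r ∧ s' = t then Mv b ins.t t else zero
  | two, H, Mv b i r => if i = ins.s ∧ r = ins.r then Dv b ins.t t ins.w else zero
  | two, two, Dv b i r s' => if i = ins.s ∧ r = ins.r then Dv b ins.t t s' else zero
  | _, _, _ => zero

/-- The right-moving machine operation `R_{irt}` attached to an instruction
`(μ_i, r, s, R, μ_j)` and `t ∈ {0,1}`. -/
def opR (ins : Instr T.states) (t : Bool) : El T → El T → El T → El T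
  | one, one, Cv b i r s' => if i = ins.s ∧ r = ins.r then Cv b ins.t t s' else zero
  | H, one, Mv b i r => if i = ins.s ∧ r = ins.r then Cv b ins.t t ins.w else zero
  | two, H, Dv b i r s' => if i = ins.s ∧ r = ins.r ∧ s' = t then Mv b ins.t t else zero
  | two, two, Dv b i r s' => if i = ins.s ∧ r = ins.r then Dv b ins.t t s' else zero
  | _, _, _ => zero

/-- The machine operation (from `𝓛 ∪ 𝓡`) attached to an instruction. -/
def mach (ins : Instr T.states) (t : Bool) (x y u : El T) : El T :=
  if ins.d then opR ins t x y u else opL ins t x y u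

/-- The relation `≺` on `{1,2,H}`. -/
def prec : El T → El T → Bool
  | two, two => true
  | two, H => true
  | one, one => true
  | _, _ => false

/-- The operation `U_F^1`. -/
def opU1 (F : El T → El T → El T → El T) (x y z u : El T) : El T :=
  if prec x z then
    if y = z then F x y u
    else if F x y u ≠ zero then (bar (F x y u)).getD zero else zero
  else zero

/-- The operation `U_F^0`. -/
def opU0 (F : El T → El T → El T → El T) (x y z u : El T) : El T :=
  if prec x z then
    if x = y then F y z u
    else if F y z u ≠ zero then (bar (F y z u)).getD zero else zero
  else zero

end El

/-- The unary operation symbols of `A'(T)`. -/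
inductive Ops1 : Type
  | I

/-- The binary operation symbols of `A'(T)`. -/
inductive Ops2 : Type
  | meet
  | mul

/-- The ternary operation symbols of `A'(T)`: `J`, `J'`, `K` and the machine
operations from `𝓛 ∪ 𝓡` (one for each instruction and each `t ∈ {0,1}`). -/
inductive Ops3 (T : TM) : Type
  | J
  | J'
  | K
  | mach (k : Fin T.instr.length) (t : Bool)

/-- The 4-ary operation symbols of `A'(T)`: `S₀`, `S₁`, `T` and the operations
`U_F^1, U_F^0` for `F ∈ 𝓛 ∪ 𝓡`. -/
inductive Ops4 (T : TM) : Type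
  | S0
  | S1
  | T
  | u1 (k : Fin T.instr.length) (t : Bool)
  | u0 (k : Fin T.instr.length) (t : Bool)

/-- The 5-ary operation symbols of `A'(T)`: `S₂`. -/
inductive Ops5 : Type
  | S2

/-- The signature (similarity type) of the algebra `A'(T)`; the constant symbol
(of arity 0) denotes the bottom element `0`. -/
def Sig (T : TM) : FirstOrder.Language.{0, 0} where
  Functions n :=
    match n with
    | 0 => PUnit
    | 1 => Ops1
    | 2 => Ops2
    | 3 => Ops3 T
    | 4 => Ops4 T
    | 5 => Ops5
    | _ => PEmpty
  Relations _ := PEmpty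


/-- The constant symbol `0` as an element of the signature. -/
def fn0 (T : TM) : (Sig T).Functions 0 := PUnit.unit
/-- Unary operation symbols as elements of the signature. -/
def fn1 (T : TM) (o : Ops1) : (Sig T).Functions 1 := o
/-- Binary operation symbols as elements of the signature. -/
def fn2 (T : TM) (o : Ops2) : (Sig T).Functions 2 := o
/-- Ternary operation symbols as elements of the signature. -/
def fn3 (T : TM) (o : Ops3 T) : (Sig T).Functions 3 := o
/-- 4-ary operation symbols as elements of the signature. -/
def fn4 (T : TM) (o : Ops4 T) : (Sig T).Functions 4 := o
/-- 5-ary operation symbols as elements of the signature. -/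
def fn5 (T : TM) (o : Ops5) : (Sig T).Functions 5 := o

/-- The algebra `A'(T)`: the interpretation of the signature `Sig T` on `El T`. -/
instance elStructure (T : TM) : (Sig T).Structure (El T) where
  funMap {n} f v :=
    match n, f, v with
    | 0, _, _ => El.zero
    | 1, Ops1.I, v => El.opI (v 0)
    | 2, Ops2.meet, v => El.meet (v 0) (v 1)
    | 2, Ops2.mul, v => El.mul (v 0) (v 1)
    | 3, Ops3.J, v => El.opJ (v 0) (v 1) (v 2)
    | 3, Ops3.J', v => El.opJ' (v 0) (v 1) (v 2)
    | 3, Ops3.K, v => El.opK (v 0) (v 1) (v 2)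
    | 3, Ops3.mach k t, v => El.mach (T.instr.get k) t (v 0) (v 1) (v 2)
    | 4, Ops4.S0, v => El.opS0 (v 0) (v 1) (v 2) (v 3)
    | 4, Ops4.S1, v => El.opS1 (v 0) (v 1) (v 2) (v 3)
    | 4, Ops4.T, v => El.opT (v 0) (v 1) (v 2) (v 3)
    | 4, Ops4.u1 k t, v => El.opU1 (El.mach (T.instr.get k) t) (v 0) (v 1) (v 2) (v 3)
    | 4, Ops4.u0 k t, v => El.opU0 (El.mach (T.instr.get k) t) (v 0) (v 1) (v 2) (v 3)
    | 5, Ops5.S2, v => El.opS2 (v 0) (v 1) (v 2) (v 3) (v 4)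
    | _ + 6, f, _ => f.elim
  RelMap {n} r _ := r.elim

/-- The product algebra `A'(T)^ι`. -/
instance piStructure (T : TM) (ι : Type*) : (Sig T).Structure (ι → El T) where
  funMap f v l := Language.Structure.funMap f fun i => v i l
  RelMap r _ := r.elim

open Language

/-- A congruence of an algebra: an equivalence relation compatible with all the
fundamental operations. -/
def IsCongruence (L : Language) (B : Type*) [L.Structure B] (ρ : B → B → Prop) : Prop :=
  Equivalence ρ ∧
    ∀ {n : ℕ} (f : L.Functions n) (v w : Fin n → B),
      (∀ i, ρ (v i) (w i)) → ρ (Structure.funMap f v) (Structure.funMap f w)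

/-- `PrinCg L B a b x y` says that `(x, y)` lies in the principal congruence
`Cg^B(a,b)` generated by the pair `(a,b)`. -/
def PrinCg (L : Language) (B : Type*) [L.Structure B] (a b x y : B) : Prop :=
  ∀ ρ : B → B → Prop, IsCongruence L B ρ → ρ a b → ρ x y

/-- `B` satisfies every identity holding in `A`; by Birkhoff's theorem this says
exactly that `B` belongs to the variety generated by `A`. -/
def ModelsIdsOf (L : Language) (A : Type*) [L.Structure A] (B : Type*) [L.Structure B] : Prop :=
  ∀ t₁ t₂ : L.Term ℕ,
    (∀ v : ℕ → A, t₁.realize v = t₂.realize v) →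
    ∀ v : ℕ → B, t₁.realize v = t₂.realize v

/-- Membership in the variety `V(A'(T))` generated by `A'(T)`. -/
def InVariety (T : TM) (B : Type*) [(Sig T).Structure B] : Prop :=
  ModelsIdsOf (Sig T) (El T) B

/-- The variety `V(A'(T))` as a class of algebras. -/
def VClass (T : TM) : ∀ (B : Type) [inst : (Sig T).Structure B], Prop :=
  fun B inst => @InVariety T B inst

/-- `φ(w,x,y,z)` is a congruence formula for the class `C`: in every member of `C`
it implies `(w,x) ∈ Cg(y,z)`. -/
def IsCongruenceFormula (L : Language) (C : ∀ (B : Type) [inst : L.Structure B], Prop)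
    (φ : L.Formula (Fin 4)) : Prop :=
  ∀ (B : Type) [L.Structure B], C B → ∀ w x y z : B,
    φ.Realize ![w, x, y, z] → PrinCg L B y z w x

/-- The class `C` has definable principal subcongruences: there are congruence
formulas `Γ` and `ψ` such that any pair `a ≠ b` admits a subpair `c ≠ d` of
`Cg(a,b)` (witnessed by `Γ`) whose principal congruence is defined by `ψ`. -/
def HasDPSC (L : Language) (C : ∀ (B : Type) [inst : L.Structure B], Prop) : Prop :=
  ∃ Γ ψ : L.Formula (Fin 4),
    IsCongruenceFormula L C Γ ∧ IsCongruenceFormula L C ψ ∧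
      ∀ (B : Type) [L.Structure B], C B → ∀ a b : B, a ≠ b →
        ∃ c d : B, c ≠ d ∧ Γ.Realize ![c, d, a, b] ∧
          ∀ x y : B, PrinCg L B c d x y ↔ ψ.Realize ![x, y, c, d]

/-- The variety `V(A'(T))` is axiomatized by a finite set of identities
(which hold in `A'(T)`). -/
def FinitelyBased (T : TM) : Prop :=
  ∃ E : List ((Sig T).Term ℕ × (Sig T).Term ℕ),
    (∀ e ∈ E, ∀ v : ℕ → El T, e.1.realize v = e.2.realize v) ∧
    ∀ (B : Type) [(Sig T).Structure B],
      (InVariety T B ↔ ∀ e ∈ E, ∀ v : ℕ → B, e.1.realize v = e.2.realize v)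

/-- An algebra is subdirectly irreducible iff some pair `a ≠ b` (generating the
monolith) belongs to every nontrivial congruence. -/
def IsSI (L : Language) (B : Type*) [L.Structure B] : Prop :=
  ∃ a b : B, a ≠ b ∧ ∀ c d : B, c ≠ d → PrinCg L B c d a b

/-- An algebra is finitely subdirectly irreducible iff any two nontrivial principal
congruences have nontrivial intersection. -/
def IsFSI (L : Language) (B : Type*) [L.Structure B] : Prop :=
  ∀ a b c d : B, a ≠ b → c ≠ d →
    ∃ x y : B, x ≠ y ∧ PrinCg L B a b x y ∧ PrinCg L B c d x y

/-- The residual bound of `V(A'(T))` is finite (`κ(A'(T)) < ω`): there is a finite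
bound strictly larger than the cardinality of every subdirectly irreducible member. -/
def ResBoundFinite (T : TM) : Prop :=
  ∃ N : ℕ, ∀ (B : Type) [(Sig T).Structure B],
    InVariety T B → IsSI (Sig T) B → Finite B ∧ Nat.card B < N

/-- Membership in `HS(A'(T))`: homomorphic images of subalgebras of `A'(T)`. -/
def InHS (T : TM) (B : Type*) [(Sig T).Structure B] : Prop :=
  ∃ (S : (Sig T).Substructure (El T)) (f : S →[Sig T] B), Function.Surjective f

/-- The constant `0` of an algebra in the signature of `A'(T)`. -/
def zeroB (T : TM) (B : Type*) [(Sig T).Structure B] : B :=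
  Structure.funMap (fn0 T) (fun i : Fin 0 => i.elim0)

/-- The meet operation of an algebra in the signature of `A'(T)`. -/
def meetB (T : TM) {B : Type*} [(Sig T).Structure B] (x y : B) : B :=
  Structure.funMap (fn2 T Ops2.meet) ![x, y]

/-- The multiplication of an algebra in the signature of `A'(T)`. -/
def mulB (T : TM) {B : Type*} [(Sig T).Structure B] (x y : B) : B :=
  Structure.funMap (fn2 T Ops2.mul) ![x, y]

/-- The operation `I` of an algebra in the signature of `A'(T)`. -/
def IB (T : TM) {B : Type*} [(Sig T).Structure B] (x : B) : B :=
  Structure.funMap (fn1 T Ops1.I) ![x]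

/-- The operation `J` of an algebra in the signature of `A'(T)`. -/
def JB (T : TM) {B : Type*} [(Sig T).Structure B] (x y z : B) : B :=
  Structure.funMap (fn3 T Ops3.J) ![x, y, z]

/-- The operation `J'` of an algebra in the signature of `A'(T)`. -/
def J'B (T : TM) {B : Type*} [(Sig T).Structure B] (x y z : B) : B :=
  Structure.funMap (fn3 T Ops3.J') ![x, y, z]

/-- The operation `K` of an algebra in the signature of `A'(T)`. -/
def KB (T : TM) {B : Type*} [(Sig T).Structure B] (x y z : B) : B :=
  Structure.funMap (fn3 T Ops3.K) ![x, y, z]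

/-- The operation `S₂` of an algebra in the signature of `A'(T)`. -/
def S2B (T : TM) {B : Type*} [(Sig T).Structure B] (u v x y z : B) : B :=
  Structure.funMap (fn5 T Ops5.S2) ![u, v, x, y, z]

/-- The term `e₂(m,n,x) = S₂(m,n,x,x,x)`. -/
def e2B (T : TM) {B : Type*} [(Sig T).Structure B] (m n x : B) : B :=
  S2B T m n x x x

/-- The semilattice order of an algebra in the signature of `A'(T)`:
`x ≤ y` iff `x ∧ y = x`. -/
def leB (T : TM) {B : Type*} [(Sig T).Structure B] (x y : B) : Prop :=
  meetB T x y = x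

/-- Parameters `m̄ ∈ B² ∪ B` for one of the operations `S₀`, `S₁`, `S₂`. -/
inductive SIdx (B : Type*) : Type _
  | s0 (m : B)
  | s1 (m : B)
  | s2 (m n : B)

/-- Which of `S₀, S₁, S₂` a parameter tuple belongs to. -/
def SIdx.tag {B : Type*} : SIdx B → Fin 3
  | .s0 _ => 0
  | .s1 _ => 1
  | .s2 _ _ => 2

/-- `SApp T σ x y z` is `S_i(m̄, x, y, z)` where `σ` packages `i` and `m̄`. -/
def SApp (T : TM) {B : Type*} [(Sig T).Structure B] : SIdx B → B → B → B → B
  | .s0 m, x, y, z => Structure.funMap (fn4 T Ops4.S0) ![m, x, y, z]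
  | .s1 m, x, y, z => Structure.funMap (fn4 T Ops4.S1) ![m, x, y, z]
  | .s2 m n, x, y, z => S2B T m n x y z

/-- `eApp T σ x` is the term function `e_i(m̄, x) = S_i(m̄, x, x, x)`. -/
def eApp (T : TM) {B : Type*} [(Sig T).Structure B] (σ : SIdx B) (x : B) : B :=
  SApp T σ x x x

/-- `Range(S_j)`: the set of values of the operation `S_j` on `B`. -/
def SRange (T : TM) (B : Type*) [(Sig T).Structure B] (j : Fin 3) : Set B :=
  {w | ∃ (σ : SIdx B) (x y z : B), σ.tag = j ∧ SApp T σ x y z = w}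

/-- A unary polynomial of `B`: a term function in one variable with parameters
from `B`. -/
def IsPolynomial (T : TM) {B : Type*} [(Sig T).Structure B] (f : B → B) : Prop :=
  ∃ t : (Sig T).Term (B ⊕ Unit), ∀ x : B, f x = t.realize (Sum.elim id fun _ => x)

/-- A fundamental translation: a unary polynomial obtained from a fundamental
operation by fixing all arguments but one. -/
def IsFundTranslation (T : TM) {B : Type*} [(Sig T).Structure B] (g : B → B) : Prop :=
  ∃ (n : ℕ) (F : (Sig T).Functions n) (i : Fin n) (v : Fin n → B),
    g = fun x => Structure.funMap F (Function.update v i x)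

/-- A polynomial generated by fundamental translations: a composition of finitely
many fundamental translations. -/
inductive IsTransPoly (T : TM) {B : Type*} [(Sig T).Structure B] : (B → B) → Prop
  | id : IsTransPoly T id
  | comp {g f : B → B} : IsFundTranslation T g → IsTransPoly T f → IsTransPoly T (g ∘ f)

end McKenzie

namespace McKenzie
section Aux

open FirstOrder Language

variable {T : TM}

/-! ### update-to-matrix helpers -/

lemma upd1_0 {α} (w : Fin 1 → α) (a : α) : Function.update w 0 a = ![a] := by
  funext j; fin_cases j <;> simp

lemma upd2_0 {α} (w : Fin 2 → α) (a : α) : Function.update w 0 a = ![a, w 1] := by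
  funext j; fin_cases j <;> simp [Function.update]

lemma upd2_1 {α} (w : Fin 2 → α) (a : α) : Function.update w 1 a = ![w 0, a] := by
  funext j; fin_cases j <;> simp [Function.update]

lemma upd3_0 {α} (w : Fin 3 → α) (a : α) : Function.update w 0 a = ![a, w 1, w 2] := by
  funext j; fin_cases j <;> simp [Function.update]

lemma upd3_1 {α} (w : Fin 3 → α) (a : α) : Function.update w 1 a = ![w 0, a, w 2] := by
  funext j; fin_cases j <;> simp [Function.update]

lemma upd3_2 {α} (w : Fin 3 → α) (a : α) : Function.update w 2 a = ![w 0, w 1, a] := by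
  funext j; fin_cases j <;> simp [Function.update]

lemma upd4_0 {α} (w : Fin 4 → α) (a : α) : Function.update w 0 a = ![a, w 1, w 2, w 3] := by
  funext j; fin_cases j <;> simp [Function.update]

lemma upd4_1 {α} (w : Fin 4 → α) (a : α) : Function.update w 1 a = ![w 0, a, w 2, w 3] := by
  funext j; fin_cases j <;> simp [Function.update]

lemma upd4_2 {α} (w : Fin 4 → α) (a : α) : Function.update w 2 a = ![w 0, w 1, a, w 3] := by
  funext j; fin_cases j <;> simp [Function.update]

lemma upd4_3 {α} (w : Fin 4 → α) (a : α) : Function.update w 3 a = ![w 0, w 1, w 2, a] := by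
  funext j; fin_cases j <;> simp [Function.update]

lemma upd5_0 {α} (w : Fin 5 → α) (a : α) : Function.update w 0 a = ![a, w 1, w 2, w 3, w 4] := by
  funext j; fin_cases j <;> simp [Function.update]

lemma upd5_1 {α} (w : Fin 5 → α) (a : α) : Function.update w 1 a = ![w 0, a, w 2, w 3, w 4] := by
  funext j; fin_cases j <;> simp [Function.update]

lemma upd5_2 {α} (w : Fin 5 → α) (a : α) : Function.update w 2 a = ![w 0, w 1, a, w 3, w 4] := by
  funext j; fin_cases j <;> simp [Function.update]

lemma upd5_3 {α} (w : Fin 5 → α) (a : α) : Function.update w 3 a = ![w 0, w 1, w 2, a, w 4] := by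
  funext j; fin_cases j <;> simp [Function.update]

lemma upd5_4 {α} (w : Fin 5 → α) (a : α) : Function.update w 4 a = ![w 0, w 1, w 2, w 3, a] := by
  funext j; fin_cases j <;> simp [Function.update]

/-! ### Basic facts about the operations of `A'(T)` -/

namespace El

lemma meet_idem (x : El T) : El.meet x x = x := if_pos rfl

lemma meet_comm (x y : El T) : El.meet x y = El.meet y x := by
  unfold El.meet; split <;> split <;> simp_all

lemma meet_zero_left (y : El T) : El.meet El.zero y = El.zero := by
  unfold El.meet; split <;> rfl

lemma meet_zero_right (x : El T) : El.meet x El.zero = El.zero := by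
  unfold El.meet; split <;> simp_all

lemma bar_ne_some_zero (y : El T) : El.bar y ≠ some El.zero := by
  cases y <;> simp [El.bar]

lemma mul_zero_left (y : El T) : El.mul El.zero y = El.zero := by
  cases y <;> rfl

lemma mul_zero_right (x : El T) : El.mul x El.zero = El.zero := by
  cases x <;> rfl

lemma opJ'_diag (x z : El T) : El.opJ' x x z = El.meet x z := if_pos rfl

lemma fjoin_self (x : El T) : El.fjoin x x = x := by
  unfold El.fjoin; split <;> rfl

lemma sCore_self (x : El T) : El.sCore x x x = x := by
  unfold El.sCore; rw [meet_idem, fjoin_self]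

lemma e0_el (m x : El T) : El.opS0 m x x x = if El.isV0 m then x else El.zero := by
  unfold El.opS0; rw [sCore_self]

lemma e1_el (m x : El T) : El.opS1 m x x x = if m = El.one ∨ m = El.two then x else El.zero := by
  unfold El.opS1; rw [sCore_self]

lemma e2_el (m n x : El T) : El.opS2 m n x x x = if El.bar n = some m then x else El.zero := by
  unfold El.opS2; rw [sCore_self]

end El

/-! ### `P0 F i`:  the operation `F` is `0`-absorbing in its `i`-th slot (in `A'(T)`) -/

def P0 (T : TM) {n : ℕ} (F : (Sig T).Functions n) (i : Fin n) : Prop :=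
  ∀ w : Fin n → El T, Structure.funMap F (Function.update w i El.zero) = El.zero

lemma p0_I0 : P0 T (fn1 T Ops1.I) 0 := by
  intro w; rw [upd1_0]; rfl

lemma p0_I (i : Fin 1) : P0 T (fn1 T Ops1.I) i := by
  fin_cases i
  exact p0_I0

lemma p0_meet0 : P0 T (fn2 T Ops2.meet) 0 := by
  intro w; rw [upd2_0]; exact El.meet_zero_left _

lemma p0_meet1 : P0 T (fn2 T Ops2.meet) 1 := by
  intro w; rw [upd2_1]; exact El.meet_zero_right _

lemma p0_mul0 : P0 T (fn2 T Ops2.mul) 0 := by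
  intro w; rw [upd2_0]; exact El.mul_zero_left _

lemma p0_mul1 : P0 T (fn2 T Ops2.mul) 1 := by
  intro w; rw [upd2_1]; exact El.mul_zero_right _

namespace El

lemma sCore_zero (y z : El T) : El.sCore El.zero y z = El.zero := by
  unfold El.sCore; rw [meet_zero_left, meet_zero_left, fjoin_self]

lemma opL_zero0 (ins : Instr T.states) (t : Bool) (y u : El T) :
    El.opL ins t El.zero y u = El.zero := by cases y <;> cases u <;> rfl

lemma opL_zero1 (ins : Instr T.states) (t : Bool) (x u : El T) :
    El.opL ins t x El.zero u = El.zero := by cases x <;> cases u <;> rfl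

lemma opL_zero2 (ins : Instr T.states) (t : Bool) (x y : El T) :
    El.opL ins t x y El.zero = El.zero := by cases x <;> cases y <;> rfl

lemma opR_zero0 (ins : Instr T.states) (t : Bool) (y u : El T) :
    El.opR ins t El.zero y u = El.zero := by cases y <;> cases u <;> rfl

lemma opR_zero1 (ins : Instr T.states) (t : Bool) (x u : El T) :
    El.opR ins t x El.zero u = El.zero := by cases x <;> cases u <;> rfl

lemma opR_zero2 (ins : Instr T.states) (t : Bool) (x y : El T) :
    El.opR ins t x y El.zero = El.zero := by cases x <;> cases y <;> rfl

lemma mach_zero0 (ins : Instr T.states) (t : Bool) (y u : El T) :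
    El.mach ins t El.zero y u = El.zero := by
  unfold El.mach; split
  · exact opR_zero0 ins t y u
  · exact opL_zero0 ins t y u

lemma mach_zero1 (ins : Instr T.states) (t : Bool) (x u : El T) :
    El.mach ins t x El.zero u = El.zero := by
  unfold El.mach; split
  · exact opR_zero1 ins t x u
  · exact opL_zero1 ins t x u

lemma mach_zero2 (ins : Instr T.states) (t : Bool) (x y : El T) :
    El.mach ins t x y El.zero = El.zero := by
  unfold El.mach; split
  · exact opR_zero2 ins t x y
  · exact opL_zero2 ins t x y

lemma prec_zero_left (z : El T) : El.prec El.zero z = false := by cases z <;> rfl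

lemma prec_zero_right (x : El T) : El.prec x El.zero = false := by cases x <;> rfl

end El

lemma p0_J0 : P0 T (fn3 T Ops3.J) 0 := by
  intro w; rw [upd3_0]
  show El.opJ El.zero (w 1) (w 2) = El.zero
  unfold El.opJ; split
  · rfl
  · split
    · exact El.meet_zero_left _
    · rfl

lemma p0_J1 : P0 T (fn3 T Ops3.J) 1 := by
  intro w; rw [upd3_1]
  show El.opJ (w 0) El.zero (w 2) = El.zero
  unfold El.opJ; split
  · assumption
  · simp [El.bar]

lemma p0_J'0 : P0 T (fn3 T Ops3.J') 0 := by
  intro w; rw [upd3_0]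
  show El.opJ' El.zero (w 1) (w 2) = El.zero
  unfold El.opJ'; split
  · exact El.meet_zero_left _
  · split
    · next h => exact absurd h (El.bar_ne_some_zero _)
    · rfl

lemma p0_J'1 : P0 T (fn3 T Ops3.J') 1 := by
  intro w; rw [upd3_1]
  show El.opJ' (w 0) El.zero (w 2) = El.zero
  unfold El.opJ'; split
  · next h => rw [h]; exact El.meet_zero_left _
  · simp [El.bar]

lemma p0_K0 : P0 T (fn3 T Ops3.K) 0 := by
  intro w; rw [upd3_0]
  show El.opK El.zero (w 1) (w 2) = El.zero
  unfold El.opK; split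
  · next h => exact absurd h (El.bar_ne_some_zero _)
  · split
    · next h => exact absurd h.2 (El.bar_ne_some_zero _)
    · exact El.meet_zero_left _

lemma p0_K1 : P0 T (fn3 T Ops3.K) 1 := by
  intro w; rw [upd3_1]
  show El.opK (w 0) El.zero (w 2) = El.zero
  unfold El.opK; split
  · simp [El.bar]
  · split
    · next h =>
        obtain ⟨h1, h2⟩ := h
        rw [h1] at h2
        exact absurd h2 (El.bar_ne_some_zero _)
    · rw [El.meet_zero_left, El.meet_zero_right]

lemma p0_mach0 (k : Fin T.instr.length) (t : Bool) : P0 T (fn3 T (Ops3.mach k t)) 0 := by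
  intro w; rw [upd3_0]; exact El.mach_zero0 _ _ _ _

lemma p0_mach1 (k : Fin T.instr.length) (t : Bool) : P0 T (fn3 T (Ops3.mach k t)) 1 := by
  intro w; rw [upd3_1]; exact El.mach_zero1 _ _ _ _

lemma p0_mach2 (k : Fin T.instr.length) (t : Bool) : P0 T (fn3 T (Ops3.mach k t)) 2 := by
  intro w; rw [upd3_2]; exact El.mach_zero2 _ _ _ _

lemma p0_S0_0 : P0 T (fn4 T Ops4.S0) 0 := by
  intro w; rw [upd4_0]
  show El.opS0 El.zero (w 1) (w 2) (w 3) = El.zero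
  rfl

lemma p0_S0_1 : P0 T (fn4 T Ops4.S0) 1 := by
  intro w; rw [upd4_1]
  show El.opS0 (w 0) El.zero (w 2) (w 3) = El.zero
  unfold El.opS0; split
  · exact El.sCore_zero _ _
  · rfl

lemma p0_S1_0 : P0 T (fn4 T Ops4.S1) 0 := by
  intro w; rw [upd4_0]
  show El.opS1 El.zero (w 1) (w 2) (w 3) = El.zero
  unfold El.opS1; split
  · next h => rcases h with h | h <;> exact absurd h (by simp)
  · rfl

lemma p0_S1_1 : P0 T (fn4 T Ops4.S1) 1 := by
  intro w; rw [upd4_1]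
  show El.opS1 (w 0) El.zero (w 2) (w 3) = El.zero
  unfold El.opS1; split
  · exact El.sCore_zero _ _
  · rfl

lemma p0_S2_0 : P0 T (fn5 T Ops5.S2) 0 := by
  intro w; rw [upd5_0]
  show El.opS2 El.zero (w 1) (w 2) (w 3) (w 4) = El.zero
  unfold El.opS2; split
  · next h => exact absurd h (El.bar_ne_some_zero _)
  · rfl

lemma p0_S2_1 : P0 T (fn5 T Ops5.S2) 1 := by
  intro w; rw [upd5_1]
  show El.opS2 (w 0) El.zero (w 2) (w 3) (w 4) = El.zero
  unfold El.opS2; split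
  · next h => simp [El.bar] at h
  · rfl

lemma p0_S2_2 : P0 T (fn5 T Ops5.S2) 2 := by
  intro w; rw [upd5_2]
  show El.opS2 (w 0) (w 1) El.zero (w 3) (w 4) = El.zero
  unfold El.opS2; split
  · exact El.sCore_zero _ _
  · rfl

lemma p0_T0 : P0 T (fn4 T Ops4.T) 0 := by
  intro w; rw [upd4_0]
  show El.opT El.zero (w 1) (w 2) (w 3) = El.zero
  unfold El.opT; rw [El.mul_zero_left]
  split <;> simp

lemma p0_T1 : P0 T (fn4 T Ops4.T) 1 := by
  intro w; rw [upd4_1]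
  show El.opT (w 0) El.zero (w 2) (w 3) = El.zero
  unfold El.opT; rw [El.mul_zero_right]
  split <;> simp

lemma p0_T2 : P0 T (fn4 T Ops4.T) 2 := by
  intro w; rw [upd4_2]
  show El.opT (w 0) (w 1) El.zero (w 3) = El.zero
  unfold El.opT; rw [El.mul_zero_left]
  split
  · next h => simp [h]
  · rfl

lemma p0_T3 : P0 T (fn4 T Ops4.T) 3 := by
  intro w; rw [upd4_3]
  show El.opT (w 0) (w 1) (w 2) El.zero = El.zero
  unfold El.opT; rw [El.mul_zero_right]
  split
  · next h => simp [h]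
  · rfl

lemma p0_u1_0 (k : Fin T.instr.length) (t : Bool) : P0 T (fn4 T (Ops4.u1 k t)) 0 := by
  intro w; rw [upd4_0]
  show El.opU1 (El.mach (T.instr.get k) t) El.zero (w 1) (w 2) (w 3) = El.zero
  unfold El.opU1; rw [El.prec_zero_left]; rfl

lemma p0_u1_1 (k : Fin T.instr.length) (t : Bool) : P0 T (fn4 T (Ops4.u1 k t)) 1 := by
  intro w; rw [upd4_1]
  show El.opU1 (El.mach (T.instr.get k) t) (w 0) El.zero (w 2) (w 3) = El.zero
  unfold El.opU1; rw [El.mach_zero1]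
  split <;> simp

lemma p0_u1_2 (k : Fin T.instr.length) (t : Bool) : P0 T (fn4 T (Ops4.u1 k t)) 2 := by
  intro w; rw [upd4_2]
  show El.opU1 (El.mach (T.instr.get k) t) (w 0) (w 1) El.zero (w 3) = El.zero
  unfold El.opU1; rw [El.prec_zero_right]; rfl

lemma p0_u1_3 (k : Fin T.instr.length) (t : Bool) : P0 T (fn4 T (Ops4.u1 k t)) 3 := by
  intro w; rw [upd4_3]
  show El.opU1 (El.mach (T.instr.get k) t) (w 0) (w 1) (w 2) El.zero = El.zero
  unfold El.opU1; rw [El.mach_zero2]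
  split <;> simp

lemma p0_u0_0 (k : Fin T.instr.length) (t : Bool) : P0 T (fn4 T (Ops4.u0 k t)) 0 := by
  intro w; rw [upd4_0]
  show El.opU0 (El.mach (T.instr.get k) t) El.zero (w 1) (w 2) (w 3) = El.zero
  unfold El.opU0; rw [El.prec_zero_left]; rfl

lemma p0_u0_1 (k : Fin T.instr.length) (t : Bool) : P0 T (fn4 T (Ops4.u0 k t)) 1 := by
  intro w; rw [upd4_1]
  show El.opU0 (El.mach (T.instr.get k) t) (w 0) El.zero (w 2) (w 3) = El.zero
  unfold El.opU0; rw [El.mach_zero0]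
  split <;> simp

lemma p0_u0_2 (k : Fin T.instr.length) (t : Bool) : P0 T (fn4 T (Ops4.u0 k t)) 2 := by
  intro w; rw [upd4_2]
  show El.opU0 (El.mach (T.instr.get k) t) (w 0) (w 1) El.zero (w 3) = El.zero
  unfold El.opU0; rw [El.prec_zero_right]; rfl

lemma p0_u0_3 (k : Fin T.instr.length) (t : Bool) : P0 T (fn4 T (Ops4.u0 k t)) 3 := by
  intro w; rw [upd4_3]
  show El.opU0 (El.mach (T.instr.get k) t) (w 0) (w 1) (w 2) El.zero = El.zero
  unfold El.opU0; rw [El.mach_zero2]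
  split <;> simp

/-! ### fixed-point lemmas for `e_i` in `A'(T)` -/

namespace El

lemma sfix0_el (m x y z : El T) :
    El.opS0 m (El.opS0 m x y z) (El.opS0 m x y z) (El.opS0 m x y z) = El.opS0 m x y z := by
  rw [e0_el]; cases h : El.isV0 m <;> simp [El.opS0, h]

lemma sfix1_el (m x y z : El T) :
    El.opS1 m (El.opS1 m x y z) (El.opS1 m x y z) (El.opS1 m x y z) = El.opS1 m x y z := by
  rw [e1_el]; by_cases h : (m = El.one ∨ m = El.two) <;> simp [El.opS1, h]

lemma sfix2_el (m n x y z : El T) :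
    El.opS2 m n (El.opS2 m n x y z) (El.opS2 m n x y z) (El.opS2 m n x y z)
      = El.opS2 m n x y z := by
  rw [e2_el]; by_cases h : El.bar n = some m <;> simp [El.opS2, h]

end El

lemma efix0_el {n : ℕ} {F : (Sig T).Functions n} {i : Fin n} (hp : P0 T F i)
    (m s : El T) (w : Fin n → El T) :
    El.opS0 m (Structure.funMap F (Function.update w i (El.opS0 m s s s)))
        (Structure.funMap F (Function.update w i (El.opS0 m s s s)))
        (Structure.funMap F (Function.update w i (El.opS0 m s s s)))
      = Structure.funMap F (Function.update w i (El.opS0 m s s s)) := by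
  rw [El.e0_el]
  cases h : El.isV0 m
  · have hs : El.opS0 m s s s = El.zero := by simp [El.opS0, h]
    rw [hs, hp w]; simp [h]
  · simp [h]

lemma efix1_el {n : ℕ} {F : (Sig T).Functions n} {i : Fin n} (hp : P0 T F i)
    (m s : El T) (w : Fin n → El T) :
    El.opS1 m (Structure.funMap F (Function.update w i (El.opS1 m s s s)))
        (Structure.funMap F (Function.update w i (El.opS1 m s s s)))
        (Structure.funMap F (Function.update w i (El.opS1 m s s s)))
      = Structure.funMap F (Function.update w i (El.opS1 m s s s)) := by
  rw [El.e1_el]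
  by_cases h : (m = El.one ∨ m = El.two)
  · simp [h]
  · have hs : El.opS1 m s s s = El.zero := by simp [El.opS1, h]
    rw [hs, hp w]; simp [h]

lemma efix2_el {n : ℕ} {F : (Sig T).Functions n} {i : Fin n} (hp : P0 T F i)
    (m m' s : El T) (w : Fin n → El T) :
    El.opS2 m m' (Structure.funMap F (Function.update w i (El.opS2 m m' s s s)))
        (Structure.funMap F (Function.update w i (El.opS2 m m' s s s)))
        (Structure.funMap F (Function.update w i (El.opS2 m m' s s s)))
      = Structure.funMap F (Function.update w i (El.opS2 m m' s s s)) := by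
  rw [El.e2_el]
  by_cases h : El.bar m' = some m
  · simp [h]
  · have hs : El.opS2 m m' s s s = El.zero := by simp [El.opS2, h]
    rw [hs, hp w]; simp [h]

/-! ### transfer of identities from `A'(T)` to `B` -/

section Transfer

variable {B : Type*} [(Sig T).Structure B]

lemma funMap_ext {n : ℕ} (F : (Sig T).Functions n) {v w : Fin n → B} (h : ∀ j, v j = w j) :
    Structure.funMap F v = Structure.funMap F w := congrArg _ (funext h)

lemma zeroB_el : zeroB T (El T) = El.zero := rfl

/-- The constant term `0`. -/
def tzero (T : TM) : (Sig T).Term ℕ := Term.func (fn0 T) (fun x => x.elim0)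

lemma realize_tzero {M : Type*} [(Sig T).Structure M] (v : ℕ → M) :
    (tzero T).realize v = zeroB T M :=
  funMap_ext (fn0 T) (fun j => j.elim0)

lemma realize_tF {M : Type*} [(Sig T).Structure M] {n : ℕ} (F : (Sig T).Functions n) (i : Fin n)
    (inner : (Sig T).Term ℕ) (ι : Fin n → ℕ) (v : ℕ → M) :
    (Term.func F (fun j : Fin n => if j = i then inner else Term.var (ι j))).realize v
      = Structure.funMap F (Function.update (fun j : Fin n => v (ι j)) i (inner.realize v)) := by
  refine congrArg _ (funext fun j => ?_)
  by_cases hj : j = i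
  · subst hj; simp
  · simp [hj, Function.update_of_ne hj]

lemma p0B (hB : InVariety T B) {n : ℕ} {F : (Sig T).Functions n} {i : Fin n} (hp : P0 T F i)
    (vv : Fin n → B) :
    Structure.funMap F (Function.update vv i (zeroB T B)) = zeroB T B := by
  have hval : ∀ v : ℕ → El T,
      (Term.func F (fun j : Fin n => if j = i then tzero T else Term.var ((j : ℕ)))).realize v
        = (tzero T).realize v := by
    intro v
    rw [realize_tF F i (tzero T) (fun j => (j : ℕ)) v, realize_tzero]
    exact hp _
  have h := hB _ _ hval (fun k => if h : k < n then vv ⟨k, h⟩ else zeroB T B)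
  rw [realize_tF F i (tzero T) (fun j => (j : ℕ)) _, realize_tzero] at h
  have e : (fun j : Fin n => if h : ((j : ℕ)) < n then vv ⟨(j : ℕ), h⟩ else zeroB T B) = vv := by
    funext j; rw [dif_pos j.isLt]
  rw [e] at h
  exact h

end Transfer

section Transfer2

variable {B : Type*} [(Sig T).Structure B]

/-- Padding valuation: `0 ↦ m`, `1 ↦ s`, `k+2 ↦ vv k`. -/
def pad2 (m s : B) {n : ℕ} (vv : Fin n → B) : ℕ → B := fun k =>
  match k with
  | 0 => m
  | 1 => s
  | (k + 2) => if h : k < n then vv ⟨k, h⟩ else m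

lemma pad2_shift (m s : B) {n : ℕ} (vv : Fin n → B) :
    (fun j : Fin n => pad2 m s vv ((j : ℕ) + 2)) = vv := by
  funext j
  show (if h : (j : ℕ) < n then vv ⟨(j : ℕ), h⟩ else m) = vv j
  rw [dif_pos j.isLt]

/-- Padding valuation: `0 ↦ m`, `1 ↦ m'`, `2 ↦ s`, `k+3 ↦ vv k`. -/
def pad3 (m m' s : B) {n : ℕ} (vv : Fin n → B) : ℕ → B := fun k =>
  match k with
  | 0 => m
  | 1 => m'
  | 2 => s
  | (k + 3) => if h : k < n then vv ⟨k, h⟩ else m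

lemma pad3_shift (m m' s : B) {n : ℕ} (vv : Fin n → B) :
    (fun j : Fin n => pad3 m m' s vv ((j : ℕ) + 3)) = vv := by
  funext j
  show (if h : (j : ℕ) < n then vv ⟨(j : ℕ), h⟩ else m) = vv j
  rw [dif_pos j.isLt]

lemma meetB_idem (hB : InVariety T B) (x : B) : meetB T x x = x := by
  have h := hB (Term.func (fn2 T Ops2.meet) ![Term.var 0, Term.var 0]) (Term.var 0)
    (fun v => El.meet_idem (v 0)) (fun _ => x)
  exact (funMap_ext (fn2 T Ops2.meet) (fun j => by fin_cases j <;> rfl)).trans h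

lemma meetB_comm (hB : InVariety T B) (x y : B) : meetB T x y = meetB T y x := by
  have h := hB (Term.func (fn2 T Ops2.meet) ![Term.var 0, Term.var 1])
    (Term.func (fn2 T Ops2.meet) ![Term.var 1, Term.var 0])
    (fun v => El.meet_comm (v 0) (v 1))
    (fun k => match k with | 0 => x | _ => y)
  exact ((funMap_ext (fn2 T Ops2.meet) (fun j => by fin_cases j <;> rfl)).trans h).trans
    (funMap_ext (fn2 T Ops2.meet) (fun j => by fin_cases j <;> rfl))

lemma J'B_diag (hB : InVariety T B) (x z : B) : J'B T x x z = meetB T x z := by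
  have h := hB (Term.func (fn3 T Ops3.J') ![Term.var 0, Term.var 0, Term.var 1])
    (Term.func (fn2 T Ops2.meet) ![Term.var 0, Term.var 1])
    (fun v => El.opJ'_diag (v 0) (v 1))
    (fun k => match k with | 0 => x | _ => z)
  exact ((funMap_ext (fn3 T Ops3.J') (fun j => by fin_cases j <;> rfl)).trans h).trans
    (funMap_ext (fn2 T Ops2.meet) (fun j => by fin_cases j <;> rfl))

lemma sfix0B (hB : InVariety T B) (m x y z : B) :
    eApp T (SIdx.s0 m) (Structure.funMap (fn4 T Ops4.S0) ![m, x, y, z])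
      = Structure.funMap (fn4 T Ops4.S0) ![m, x, y, z] := by
  classical
  let tw : (Sig T).Term ℕ :=
    Term.func (fn4 T Ops4.S0) ![Term.var 0, Term.var 1, Term.var 2, Term.var 3]
  let t1 : (Sig T).Term ℕ := Term.func (fn4 T Ops4.S0) ![Term.var 0, tw, tw, tw]
  have hval : ∀ v : ℕ → El T, t1.realize v = tw.realize v :=
    fun v => El.sfix0_el (v 0) (v 1) (v 2) (v 3)
  have h := hB t1 tw hval (fun k => match k with | 0 => m | 1 => x | 2 => y | _ => z)
  have h2 : tw.realize (fun k : ℕ => match k with | 0 => m | 1 => x | 2 => y | _ => z)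
      = Structure.funMap (fn4 T Ops4.S0) ![m, x, y, z] :=
    funMap_ext (fn4 T Ops4.S0) (fun j => by fin_cases j <;> rfl)
  have h1 : t1.realize (fun k : ℕ => match k with | 0 => m | 1 => x | 2 => y | _ => z)
      = eApp T (SIdx.s0 m)
          (tw.realize (fun k : ℕ => match k with | 0 => m | 1 => x | 2 => y | _ => z)) :=
    funMap_ext (fn4 T Ops4.S0) (fun j => by fin_cases j <;> rfl)
  rw [h1, h2] at h
  exact h

lemma sfix1B (hB : InVariety T B) (m x y z : B) :
    eApp T (SIdx.s1 m) (Structure.funMap (fn4 T Ops4.S1) ![m, x, y, z])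
      = Structure.funMap (fn4 T Ops4.S1) ![m, x, y, z] := by
  classical
  let tw : (Sig T).Term ℕ :=
    Term.func (fn4 T Ops4.S1) ![Term.var 0, Term.var 1, Term.var 2, Term.var 3]
  let t1 : (Sig T).Term ℕ := Term.func (fn4 T Ops4.S1) ![Term.var 0, tw, tw, tw]
  have hval : ∀ v : ℕ → El T, t1.realize v = tw.realize v :=
    fun v => El.sfix1_el (v 0) (v 1) (v 2) (v 3)
  have h := hB t1 tw hval (fun k => match k with | 0 => m | 1 => x | 2 => y | _ => z)
  have h2 : tw.realize (fun k : ℕ => match k with | 0 => m | 1 => x | 2 => y | _ => z)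
      = Structure.funMap (fn4 T Ops4.S1) ![m, x, y, z] :=
    funMap_ext (fn4 T Ops4.S1) (fun j => by fin_cases j <;> rfl)
  have h1 : t1.realize (fun k : ℕ => match k with | 0 => m | 1 => x | 2 => y | _ => z)
      = eApp T (SIdx.s1 m)
          (tw.realize (fun k : ℕ => match k with | 0 => m | 1 => x | 2 => y | _ => z)) :=
    funMap_ext (fn4 T Ops4.S1) (fun j => by fin_cases j <;> rfl)
  rw [h1, h2] at h
  exact h

lemma sfix2B (hB : InVariety T B) (m m' x y z : B) :
    eApp T (SIdx.s2 m m') (Structure.funMap (fn5 T Ops5.S2) ![m, m', x, y, z])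
      = Structure.funMap (fn5 T Ops5.S2) ![m, m', x, y, z] := by
  classical
  let tw : (Sig T).Term ℕ :=
    Term.func (fn5 T Ops5.S2) ![Term.var 0, Term.var 1, Term.var 2, Term.var 3, Term.var 4]
  let t1 : (Sig T).Term ℕ := Term.func (fn5 T Ops5.S2) ![Term.var 0, Term.var 1, tw, tw, tw]
  have hval : ∀ v : ℕ → El T, t1.realize v = tw.realize v :=
    fun v => El.sfix2_el (v 0) (v 1) (v 2) (v 3) (v 4)
  have h := hB t1 tw hval (fun k => match k with | 0 => m | 1 => m' | 2 => x | 3 => y | _ => z)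
  have h2 : tw.realize (fun k : ℕ => match k with | 0 => m | 1 => m' | 2 => x | 3 => y | _ => z)
      = Structure.funMap (fn5 T Ops5.S2) ![m, m', x, y, z] :=
    funMap_ext (fn5 T Ops5.S2) (fun j => by fin_cases j <;> rfl)
  have h1 : t1.realize (fun k : ℕ => match k with | 0 => m | 1 => m' | 2 => x | 3 => y | _ => z)
      = eApp T (SIdx.s2 m m')
          (tw.realize (fun k : ℕ => match k with | 0 => m | 1 => m' | 2 => x | 3 => y | _ => z)) :=
    funMap_ext (fn5 T Ops5.S2) (fun j => by fin_cases j <;> rfl)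
  rw [h1, h2] at h
  exact h

lemma efix0B (hB : InVariety T B) {n : ℕ} {F : (Sig T).Functions n} {i : Fin n} (hp : P0 T F i)
    (m s : B) (vv : Fin n → B) :
    eApp T (SIdx.s0 m) (Structure.funMap F (Function.update vv i (eApp T (SIdx.s0 m) s)))
      = Structure.funMap F (Function.update vv i (eApp T (SIdx.s0 m) s)) := by
  classical
  let inner : (Sig T).Term ℕ :=
    Term.func (fn4 T Ops4.S0) ![Term.var 0, Term.var 1, Term.var 1, Term.var 1]
  let tf : (Sig T).Term ℕ :=
    Term.func F (fun j : Fin n => if j = i then inner else Term.var ((j : ℕ) + 2))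
  let t1 : (Sig T).Term ℕ := Term.func (fn4 T Ops4.S0) ![Term.var 0, tf, tf, tf]
  have hval : ∀ v : ℕ → El T, t1.realize v = tf.realize v := by
    intro v
    have h2 : tf.realize v = Structure.funMap F
        (Function.update (fun j : Fin n => v ((j : ℕ) + 2)) i
          (El.opS0 (v 0) (v 1) (v 1) (v 1))) :=
      realize_tF F i inner (fun j => (j : ℕ) + 2) v
    have h1 : t1.realize v = El.opS0 (v 0) (tf.realize v) (tf.realize v) (tf.realize v) := rfl
    rw [h1, h2]
    exact efix0_el hp (v 0) (v 1) _
  have h := hB t1 tf hval (pad2 m s vv)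
  have h2 : tf.realize (pad2 m s vv)
      = Structure.funMap F (Function.update vv i (eApp T (SIdx.s0 m) s)) := by
    have h3 := realize_tF F i inner (fun j => (j : ℕ) + 2) (pad2 m s vv)
    rw [pad2_shift] at h3
    have hi : inner.realize (pad2 m s vv) = eApp T (SIdx.s0 m) s :=
      funMap_ext (fn4 T Ops4.S0) (fun j => by fin_cases j <;> rfl)
    rw [hi] at h3
    exact h3
  have h1 : t1.realize (pad2 m s vv) = eApp T (SIdx.s0 m) (tf.realize (pad2 m s vv)) :=
    funMap_ext (fn4 T Ops4.S0) (fun j => by fin_cases j <;> rfl)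
  rw [h1, h2] at h
  exact h

lemma efix1B (hB : InVariety T B) {n : ℕ} {F : (Sig T).Functions n} {i : Fin n} (hp : P0 T F i)
    (m s : B) (vv : Fin n → B) :
    eApp T (SIdx.s1 m) (Structure.funMap F (Function.update vv i (eApp T (SIdx.s1 m) s)))
      = Structure.funMap F (Function.update vv i (eApp T (SIdx.s1 m) s)) := by
  classical
  let inner : (Sig T).Term ℕ :=
    Term.func (fn4 T Ops4.S1) ![Term.var 0, Term.var 1, Term.var 1, Term.var 1]
  let tf : (Sig T).Term ℕ :=
    Term.func F (fun j : Fin n => if j = i then inner else Term.var ((j : ℕ) + 2))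
  let t1 : (Sig T).Term ℕ := Term.func (fn4 T Ops4.S1) ![Term.var 0, tf, tf, tf]
  have hval : ∀ v : ℕ → El T, t1.realize v = tf.realize v := by
    intro v
    have h2 : tf.realize v = Structure.funMap F
        (Function.update (fun j : Fin n => v ((j : ℕ) + 2)) i
          (El.opS1 (v 0) (v 1) (v 1) (v 1))) :=
      realize_tF F i inner (fun j => (j : ℕ) + 2) v
    have h1 : t1.realize v = El.opS1 (v 0) (tf.realize v) (tf.realize v) (tf.realize v) := rfl
    rw [h1, h2]
    exact efix1_el hp (v 0) (v 1) _
  have h := hB t1 tf hval (pad2 m s vv)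
  have h2 : tf.realize (pad2 m s vv)
      = Structure.funMap F (Function.update vv i (eApp T (SIdx.s1 m) s)) := by
    have h3 := realize_tF F i inner (fun j => (j : ℕ) + 2) (pad2 m s vv)
    rw [pad2_shift] at h3
    have hi : inner.realize (pad2 m s vv) = eApp T (SIdx.s1 m) s :=
      funMap_ext (fn4 T Ops4.S1) (fun j => by fin_cases j <;> rfl)
    rw [hi] at h3
    exact h3
  have h1 : t1.realize (pad2 m s vv) = eApp T (SIdx.s1 m) (tf.realize (pad2 m s vv)) :=
    funMap_ext (fn4 T Ops4.S1) (fun j => by fin_cases j <;> rfl)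
  rw [h1, h2] at h
  exact h

lemma efix2B (hB : InVariety T B) {n : ℕ} {F : (Sig T).Functions n} {i : Fin n} (hp : P0 T F i)
    (m m' s : B) (vv : Fin n → B) :
    eApp T (SIdx.s2 m m') (Structure.funMap F (Function.update vv i (eApp T (SIdx.s2 m m') s)))
      = Structure.funMap F (Function.update vv i (eApp T (SIdx.s2 m m') s)) := by
  classical
  let inner : (Sig T).Term ℕ :=
    Term.func (fn5 T Ops5.S2) ![Term.var 0, Term.var 1, Term.var 2, Term.var 2, Term.var 2]
  let tf : (Sig T).Term ℕ :=
    Term.func F (fun j : Fin n => if j = i then inner else Term.var ((j : ℕ) + 3))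
  let t1 : (Sig T).Term ℕ := Term.func (fn5 T Ops5.S2) ![Term.var 0, Term.var 1, tf, tf, tf]
  have hval : ∀ v : ℕ → El T, t1.realize v = tf.realize v := by
    intro v
    have h2 : tf.realize v = Structure.funMap F
        (Function.update (fun j : Fin n => v ((j : ℕ) + 3)) i
          (El.opS2 (v 0) (v 1) (v 2) (v 2) (v 2))) :=
      realize_tF F i inner (fun j => (j : ℕ) + 3) v
    have h1 : t1.realize v
        = El.opS2 (v 0) (v 1) (tf.realize v) (tf.realize v) (tf.realize v) := rfl
    rw [h1, h2]
    exact efix2_el hp (v 0) (v 1) (v 2) _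
  have h := hB t1 tf hval (pad3 m m' s vv)
  have h2 : tf.realize (pad3 m m' s vv)
      = Structure.funMap F (Function.update vv i (eApp T (SIdx.s2 m m') s)) := by
    have h3 := realize_tF F i inner (fun j => (j : ℕ) + 3) (pad3 m m' s vv)
    rw [pad3_shift] at h3
    have hi : inner.realize (pad3 m m' s vv) = eApp T (SIdx.s2 m m') s :=
      funMap_ext (fn5 T Ops5.S2) (fun j => by fin_cases j <;> rfl)
    rw [hi] at h3
    exact h3
  have h1 : t1.realize (pad3 m m' s vv) = eApp T (SIdx.s2 m m') (tf.realize (pad3 m m' s vv)) :=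
    funMap_ext (fn5 T Ops5.S2) (fun j => by fin_cases j <;> rfl)
  rw [h1, h2] at h
  exact h

end Transfer2

/-! ### bundled `0`-absorption lemmas -/

lemma p0_meet (i : Fin 2) : P0 T (fn2 T Ops2.meet) i := by
  fin_cases i
  exacts [p0_meet0, p0_meet1]

lemma p0_mul (i : Fin 2) : P0 T (fn2 T Ops2.mul) i := by
  fin_cases i
  exacts [p0_mul0, p0_mul1]

lemma p0_mach (k : Fin T.instr.length) (t : Bool) (i : Fin 3) :
    P0 T (fn3 T (Ops3.mach k t)) i := by
  fin_cases i
  exacts [p0_mach0 k t, p0_mach1 k t, p0_mach2 k t]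

lemma p0_T (i : Fin 4) : P0 T (fn4 T Ops4.T) i := by
  fin_cases i
  exacts [p0_T0, p0_T1, p0_T2, p0_T3]

lemma p0_u1 (k : Fin T.instr.length) (t : Bool) (i : Fin 4) :
    P0 T (fn4 T (Ops4.u1 k t)) i := by
  fin_cases i
  exacts [p0_u1_0 k t, p0_u1_1 k t, p0_u1_2 k t, p0_u1_3 k t]

lemma p0_u0 (k : Fin T.instr.length) (t : Bool) (i : Fin 4) :
    P0 T (fn4 T (Ops4.u0 k t)) i := by
  fin_cases i
  exacts [p0_u0_0 k t, p0_u0_1 k t, p0_u0_2 k t, p0_u0_3 k t]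

/-! ### the main induction -/

section Main

variable {B : Type*} [(Sig T).Structure B]

/-- The invariant condition on the accumulated inner polynomial:
either it is `0`-absorbing, or its range is fixed by some `e_i(m̄, -)`. -/
def Cond' (T : TM) {B : Type*} [(Sig T).Structure B] (h : B → B) : Prop :=
  h (zeroB T B) = zeroB T B ∨ ∃ σ'' : SIdx B, ∀ b : B, eApp T σ'' (h b) = h b

lemma cond'_range {h : B → B} (hc : Cond' T h) :
    h (zeroB T B) = zeroB T B ∨ ∃ k : Fin 3, Set.range h ⊆ SRange T B k := by
  rcases hc with h0 | ⟨σ'', hfix⟩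
  · exact Or.inl h0
  · refine Or.inr ⟨σ''.tag, ?_⟩
    rintro w ⟨b, rfl⟩
    exact ⟨σ'', h b, h b, h b, rfl, hfix b⟩

lemma cond'_absorb (hB : InVariety T B) {n : ℕ} {F : (Sig T).Functions n} {i : Fin n}
    (hp : P0 T F i) (vv : Fin n → B) {h₀ : B → B} (hcond : Cond' T h₀) :
    Cond' T ((fun x => Structure.funMap F (Function.update vv i x)) ∘ h₀) := by
  rcases hcond with h0 | ⟨σ'', hfix⟩
  · left
    show Structure.funMap F (Function.update vv i (h₀ (zeroB T B))) = zeroB T B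
    rw [h0]
    exact p0B hB hp vv
  · right
    refine ⟨σ'', fun b => ?_⟩
    show eApp T σ'' (Structure.funMap F (Function.update vv i (h₀ b)))
      = Structure.funMap F (Function.update vv i (h₀ b))
    cases σ'' with
    | s0 m =>
        have key := efix0B hB hp m (h₀ b) vv
        rw [hfix b] at key
        exact key
    | s1 m =>
        have key := efix1B hB hp m (h₀ b) vv
        rw [hfix b] at key
        exact key
    | s2 m m' =>
        have key := efix2B hB hp m m' (h₀ b) vv
        rw [hfix b] at key
        exact key

lemma cond'_S0_2 (hB : InVariety T B) (vv : Fin 4 → B) (h₀ : B → B) :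
    Cond' T ((fun x => Structure.funMap (fn4 T Ops4.S0) (Function.update vv 2 x)) ∘ h₀) := by
  refine Or.inr ⟨SIdx.s0 (vv 0), fun b => ?_⟩
  show eApp T (SIdx.s0 (vv 0)) (Structure.funMap (fn4 T Ops4.S0) (Function.update vv 2 (h₀ b)))
    = Structure.funMap (fn4 T Ops4.S0) (Function.update vv 2 (h₀ b))
  rw [upd4_2]
  exact sfix0B hB _ _ _ _

lemma cond'_S0_3 (hB : InVariety T B) (vv : Fin 4 → B) (h₀ : B → B) :
    Cond' T ((fun x => Structure.funMap (fn4 T Ops4.S0) (Function.update vv 3 x)) ∘ h₀) := by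
  refine Or.inr ⟨SIdx.s0 (vv 0), fun b => ?_⟩
  show eApp T (SIdx.s0 (vv 0)) (Structure.funMap (fn4 T Ops4.S0) (Function.update vv 3 (h₀ b)))
    = Structure.funMap (fn4 T Ops4.S0) (Function.update vv 3 (h₀ b))
  rw [upd4_3]
  exact sfix0B hB _ _ _ _

lemma cond'_S1_2 (hB : InVariety T B) (vv : Fin 4 → B) (h₀ : B → B) :
    Cond' T ((fun x => Structure.funMap (fn4 T Ops4.S1) (Function.update vv 2 x)) ∘ h₀) := by
  refine Or.inr ⟨SIdx.s1 (vv 0), fun b => ?_⟩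
  show eApp T (SIdx.s1 (vv 0)) (Structure.funMap (fn4 T Ops4.S1) (Function.update vv 2 (h₀ b)))
    = Structure.funMap (fn4 T Ops4.S1) (Function.update vv 2 (h₀ b))
  rw [upd4_2]
  exact sfix1B hB _ _ _ _

lemma cond'_S1_3 (hB : InVariety T B) (vv : Fin 4 → B) (h₀ : B → B) :
    Cond' T ((fun x => Structure.funMap (fn4 T Ops4.S1) (Function.update vv 3 x)) ∘ h₀) := by
  refine Or.inr ⟨SIdx.s1 (vv 0), fun b => ?_⟩
  show eApp T (SIdx.s1 (vv 0)) (Structure.funMap (fn4 T Ops4.S1) (Function.update vv 3 (h₀ b)))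
    = Structure.funMap (fn4 T Ops4.S1) (Function.update vv 3 (h₀ b))
  rw [upd4_3]
  exact sfix1B hB _ _ _ _

lemma cond'_S2_3 (hB : InVariety T B) (vv : Fin 5 → B) (h₀ : B → B) :
    Cond' T ((fun x => Structure.funMap (fn5 T Ops5.S2) (Function.update vv 3 x)) ∘ h₀) := by
  refine Or.inr ⟨SIdx.s2 (vv 0) (vv 1), fun b => ?_⟩
  show eApp T (SIdx.s2 (vv 0) (vv 1))
      (Structure.funMap (fn5 T Ops5.S2) (Function.update vv 3 (h₀ b)))
    = Structure.funMap (fn5 T Ops5.S2) (Function.update vv 3 (h₀ b))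
  rw [upd5_3]
  exact sfix2B hB _ _ _ _ _

lemma cond'_S2_4 (hB : InVariety T B) (vv : Fin 5 → B) (h₀ : B → B) :
    Cond' T ((fun x => Structure.funMap (fn5 T Ops5.S2) (Function.update vv 4 x)) ∘ h₀) := by
  refine Or.inr ⟨SIdx.s2 (vv 0) (vv 1), fun b => ?_⟩
  show eApp T (SIdx.s2 (vv 0) (vv 1))
      (Structure.funMap (fn5 T Ops5.S2) (Function.update vv 4 (h₀ b)))
    = Structure.funMap (fn5 T Ops5.S2) (Function.update vv 4 (h₀ b))
  rw [upd5_4]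
  exact sfix2B hB _ _ _ _ _

end Main

/-- Reversed-composition view of `IsTransPoly`: translations are peeled off
on the inside. -/
inductive RevPoly (T : TM) {B : Type*} [(Sig T).Structure B] : (B → B) → Prop
  | id : RevPoly T id
  | comp {f τ : B → B} : RevPoly T f → IsFundTranslation T τ → RevPoly T (f ∘ τ)

section Main2

variable {B : Type*} [(Sig T).Structure B]

lemma transPoly_comp_right {f τ : B → B} (hf : IsTransPoly T f) (hτ : IsFundTranslation T τ) :
    IsTransPoly T (f ∘ τ) := by
  induction hf with
  | id => exact IsTransPoly.comp (f := id) hτ IsTransPoly.id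
  | @comp g f0 hg _ ih => exact IsTransPoly.comp (g := g) (f := f0 ∘ τ) hg ih

lemma revPoly_toTransPoly {f : B → B} (hf : RevPoly T f) : IsTransPoly T f := by
  induction hf with
  | id => exact IsTransPoly.id
  | comp _ hτ ih => exact transPoly_comp_right ih hτ

lemma revPoly_comp_left {f τ : B → B} (hτ : IsFundTranslation T τ) (hf : RevPoly T f) :
    RevPoly T (τ ∘ f) := by
  induction hf with
  | id => exact RevPoly.comp (f := id) (τ := τ) RevPoly.id hτ
  | @comp f0 τ' _ hτ' ih => exact RevPoly.comp (f := τ ∘ f0) (τ := τ') ih hτ'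

lemma transPoly_toRevPoly {f : B → B} (hf : IsTransPoly T f) : RevPoly T f := by
  induction hf with
  | id => exact RevPoly.id
  | comp hg _ ih => exact revPoly_comp_left hg ih

lemma fund_of (n : ℕ) (F : (Sig T).Functions n) (i : Fin n) (vv : Fin n → B) :
    IsFundTranslation T (fun x : B => Structure.funMap F (Function.update vv i x)) :=
  ⟨n, F, i, vv, rfl⟩

/-- The target form of the conclusion. -/
def Forms (g' : B → B) : Prop :=
  ∃ (p q : B) (h f : B → B), IsTransPoly T h ∧ IsTransPoly T f ∧
    (h (zeroB T B) = zeroB T B ∨ ∃ k : Fin 3, Set.range h ⊆ SRange T B k) ∧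
    ((∃ σ' : SIdx B, g' = fun x => SApp T σ' p q (h x)) ∨
      g' = (fun x => f (JB T p q (h x))) ∨
      g' = (fun x => f (J'B T p q (h x))) ∨
      g' = (fun x => f (KB T p q (h x))))

lemma stop_J {f₂ : B → B} (hf₂ : IsTransPoly T f₂) (vv : Fin 3 → B) {h₀ : B → B}
    (hh₀ : IsTransPoly T h₀)
    (hcr : h₀ (zeroB T B) = zeroB T B ∨ ∃ k : Fin 3, Set.range h₀ ⊆ SRange T B k) (c d : B) :
    ∃ g' : B → B,
      g' c = f₂ (Structure.funMap (fn3 T Ops3.J) (Function.update vv 2 (h₀ c))) ∧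
      g' d = f₂ (Structure.funMap (fn3 T Ops3.J) (Function.update vv 2 (h₀ d))) ∧
      Forms (T := T) g' := by
  refine ⟨fun x => f₂ (JB T (vv 0) (vv 1) (h₀ x)), ?_, ?_, vv 0, vv 1, h₀, f₂, hh₀, hf₂, hcr,
    Or.inr (Or.inl rfl)⟩
  · show f₂ (Structure.funMap (fn3 T Ops3.J) ![vv 0, vv 1, h₀ c]) = _
    rw [upd3_2]
  · show f₂ (Structure.funMap (fn3 T Ops3.J) ![vv 0, vv 1, h₀ d]) = _
    rw [upd3_2]

lemma stop_J' {f₂ : B → B} (hf₂ : IsTransPoly T f₂) (vv : Fin 3 → B) {h₀ : B → B}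
    (hh₀ : IsTransPoly T h₀)
    (hcr : h₀ (zeroB T B) = zeroB T B ∨ ∃ k : Fin 3, Set.range h₀ ⊆ SRange T B k) (c d : B) :
    ∃ g' : B → B,
      g' c = f₂ (Structure.funMap (fn3 T Ops3.J') (Function.update vv 2 (h₀ c))) ∧
      g' d = f₂ (Structure.funMap (fn3 T Ops3.J') (Function.update vv 2 (h₀ d))) ∧
      Forms (T := T) g' := by
  refine ⟨fun x => f₂ (J'B T (vv 0) (vv 1) (h₀ x)), ?_, ?_, vv 0, vv 1, h₀, f₂, hh₀, hf₂, hcr,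
    Or.inr (Or.inr (Or.inl rfl))⟩
  · show f₂ (Structure.funMap (fn3 T Ops3.J') ![vv 0, vv 1, h₀ c]) = _
    rw [upd3_2]
  · show f₂ (Structure.funMap (fn3 T Ops3.J') ![vv 0, vv 1, h₀ d]) = _
    rw [upd3_2]

lemma stop_K {f₂ : B → B} (hf₂ : IsTransPoly T f₂) (vv : Fin 3 → B) {h₀ : B → B}
    (hh₀ : IsTransPoly T h₀)
    (hcr : h₀ (zeroB T B) = zeroB T B ∨ ∃ k : Fin 3, Set.range h₀ ⊆ SRange T B k) (c d : B) :
    ∃ g' : B → B,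
      g' c = f₂ (Structure.funMap (fn3 T Ops3.K) (Function.update vv 2 (h₀ c))) ∧
      g' d = f₂ (Structure.funMap (fn3 T Ops3.K) (Function.update vv 2 (h₀ d))) ∧
      Forms (T := T) g' := by
  refine ⟨fun x => f₂ (KB T (vv 0) (vv 1) (h₀ x)), ?_, ?_, vv 0, vv 1, h₀, f₂, hh₀, hf₂, hcr,
    Or.inr (Or.inr (Or.inr rfl))⟩
  · show f₂ (Structure.funMap (fn3 T Ops3.K) ![vv 0, vv 1, h₀ c]) = _
    rw [upd3_2]
  · show f₂ (Structure.funMap (fn3 T Ops3.K) ![vv 0, vv 1, h₀ d]) = _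
    rw [upd3_2]

lemma main (hB : InVariety T B) {f : B → B} (hf : RevPoly T f) :
    ∀ h₀ : B → B, IsTransPoly T h₀ → Cond' T h₀ →
      ∀ c d : B, leB T (f (h₀ d)) (f (h₀ c)) →
        ∃ g' : B → B, g' c = f (h₀ c) ∧ g' d = f (h₀ d) ∧ Forms (T := T) g' := by
  induction hf with
  | id =>
      intro h₀ hh₀ hcond c d hle
      refine ⟨fun x => J'B T (h₀ c) (h₀ c) (h₀ x), ?_, ?_, h₀ c, h₀ c, h₀, id, hh₀,
        IsTransPoly.id, cond'_range hcond, Or.inr (Or.inr (Or.inl rfl))⟩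
      · show J'B T (h₀ c) (h₀ c) (h₀ c) = h₀ c
        rw [J'B_diag hB, meetB_idem hB]
      · show J'B T (h₀ c) (h₀ c) (h₀ d) = h₀ d
        rw [J'B_diag hB, meetB_comm hB]
        exact hle
  | @comp f₂ τ hf₂ hτ ih =>
      intro h₀ hh₀ hcond c d hle
      obtain ⟨n, F, i, vv, rfl⟩ := hτ
      rcases n with _ | _ | _ | _ | _ | _ | n
      · exact i.elim0
      · -- arity 1 : I
        cases F with
        | I => exact ih _ (IsTransPoly.comp (fund_of _ _ i vv) hh₀) (cond'_absorb hB (p0_I i) vv hcond) c d hle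
      · -- arity 2 : meet, mul
        cases F with
        | meet => exact ih _ (IsTransPoly.comp (fund_of _ _ i vv) hh₀) (cond'_absorb hB (p0_meet i) vv hcond) c d hle
        | mul => exact ih _ (IsTransPoly.comp (fund_of _ _ i vv) hh₀) (cond'_absorb hB (p0_mul i) vv hcond) c d hle
      · -- arity 3 : J, J', K, mach
        cases F with
        | J =>
            fin_cases i
            · exact ih _ (IsTransPoly.comp (fund_of _ _ _ vv) hh₀) (cond'_absorb hB p0_J0 vv hcond) c d hle
            · exact ih _ (IsTransPoly.comp (fund_of _ _ _ vv) hh₀) (cond'_absorb hB p0_J1 vv hcond) c d hle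
            · exact stop_J (revPoly_toTransPoly hf₂) vv hh₀ (cond'_range hcond) c d
        | J' =>
            fin_cases i
            · exact ih _ (IsTransPoly.comp (fund_of _ _ _ vv) hh₀) (cond'_absorb hB p0_J'0 vv hcond) c d hle
            · exact ih _ (IsTransPoly.comp (fund_of _ _ _ vv) hh₀) (cond'_absorb hB p0_J'1 vv hcond) c d hle
            · exact stop_J' (revPoly_toTransPoly hf₂) vv hh₀ (cond'_range hcond) c d
        | K =>
            fin_cases i
            · exact ih _ (IsTransPoly.comp (fund_of _ _ _ vv) hh₀) (cond'_absorb hB p0_K0 vv hcond) c d hle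
            · exact ih _ (IsTransPoly.comp (fund_of _ _ _ vv) hh₀) (cond'_absorb hB p0_K1 vv hcond) c d hle
            · exact stop_K (revPoly_toTransPoly hf₂) vv hh₀ (cond'_range hcond) c d
        | mach k t => exact ih _ (IsTransPoly.comp (fund_of _ _ i vv) hh₀) (cond'_absorb hB (p0_mach k t i) vv hcond) c d hle
      · -- arity 4 : S0, S1, T, u1, u0
        cases F with
        | S0 =>
            fin_cases i
            · exact ih _ (IsTransPoly.comp (fund_of _ _ _ vv) hh₀) (cond'_absorb hB p0_S0_0 vv hcond) c d hle
            · exact ih _ (IsTransPoly.comp (fund_of _ _ _ vv) hh₀) (cond'_absorb hB p0_S0_1 vv hcond) c d hle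
            · exact ih _ (IsTransPoly.comp (fund_of _ _ _ vv) hh₀) (cond'_S0_2 hB vv h₀) c d hle
            · exact ih _ (IsTransPoly.comp (fund_of _ _ _ vv) hh₀) (cond'_S0_3 hB vv h₀) c d hle
        | S1 =>
            fin_cases i
            · exact ih _ (IsTransPoly.comp (fund_of _ _ _ vv) hh₀) (cond'_absorb hB p0_S1_0 vv hcond) c d hle
            · exact ih _ (IsTransPoly.comp (fund_of _ _ _ vv) hh₀) (cond'_absorb hB p0_S1_1 vv hcond) c d hle
            · exact ih _ (IsTransPoly.comp (fund_of _ _ _ vv) hh₀) (cond'_S1_2 hB vv h₀) c d hle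
            · exact ih _ (IsTransPoly.comp (fund_of _ _ _ vv) hh₀) (cond'_S1_3 hB vv h₀) c d hle
        | T => exact ih _ (IsTransPoly.comp (fund_of _ _ i vv) hh₀) (cond'_absorb hB (p0_T i) vv hcond) c d hle
        | u1 k t => exact ih _ (IsTransPoly.comp (fund_of _ _ i vv) hh₀) (cond'_absorb hB (p0_u1 k t i) vv hcond) c d hle
        | u0 k t => exact ih _ (IsTransPoly.comp (fund_of _ _ i vv) hh₀) (cond'_absorb hB (p0_u0 k t i) vv hcond) c d hle
      · -- arity 5 : S2
        cases F with
        | S2 =>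
            fin_cases i
            · exact ih _ (IsTransPoly.comp (fund_of _ _ _ vv) hh₀) (cond'_absorb hB p0_S2_0 vv hcond) c d hle
            · exact ih _ (IsTransPoly.comp (fund_of _ _ _ vv) hh₀) (cond'_absorb hB p0_S2_1 vv hcond) c d hle
            · exact ih _ (IsTransPoly.comp (fund_of _ _ _ vv) hh₀) (cond'_absorb hB p0_S2_2 vv hcond) c d hle
            · exact ih _ (IsTransPoly.comp (fund_of _ _ _ vv) hh₀) (cond'_S2_3 hB vv h₀) c d hle
            · exact ih _ (IsTransPoly.comp (fund_of _ _ _ vv) hh₀) (cond'_S2_4 hB vv h₀) c d hle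
      · exact PEmpty.elim F

end Main2

end Aux


/-- Let `c, d ∈ e_i(m̄,B)` for some `i ∈ {0,1,2}`,
`m̄ ∈ B² ∪ B`.  If `g(x)` is a polynomial generated by fundamental translations
with `g(d) < g(c)`, then there is a polynomial `g'(x)` with `g'(c) = g(c)`,
`g'(d) = g(d)` of one of the forms `S_j(n̄,p,q,h(x))`, `f(J(p,q,h(x)))`,
`f(J'(p,q,h(x)))`, `f(K(p,q,h(x)))`, where `f, h` are generated by fundamental
translations and `h` is `0`-absorbing or `Range(h) ⊆ Range(S_k)` for some `k`. -/
theorem transPoly_normal_form (T : TM) (B : Type*) [(Sig T).Structure B]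
    (hB : InVariety T B)
    (σ : SIdx B) (c d : B)
    (hc : c ∈ Set.range (eApp T σ)) (hd : d ∈ Set.range (eApp T σ))
    (g : B → B) (hg : IsTransPoly T g)
    (hlt : leB T (g d) (g c) ∧ g d ≠ g c) :
    ∃ g' : B → B, g' c = g c ∧ g' d = g d ∧
      ∃ (p q : B) (h f : B → B), IsTransPoly T h ∧ IsTransPoly T f ∧
        (h (zeroB T B) = zeroB T B ∨ ∃ k : Fin 3, Set.range h ⊆ SRange T B k) ∧
        ((∃ σ' : SIdx B, g' = fun x => SApp T σ' p q (h x)) ∨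
          g' = (fun x => f (JB T p q (h x))) ∨
          g' = (fun x => f (J'B T p q (h x))) ∨
          g' = (fun x => f (KB T p q (h x)))) := by
  obtain ⟨g', h1, h2, h3⟩ :=
    main hB (transPoly_toRevPoly hg) id IsTransPoly.id (Or.inl rfl) c d hlt.1
  exact ⟨g', h1, h2, h3⟩

end McKenzie
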